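/- Decoding correctness: let π be a word that is a concatenation of clockwise strings c_1 c_2 … c_t where each c_j lies in enc(γ_j) for symbols γ_j ∈ Γ = Q ∪ Σ ∪ {#}. Then this decomposition into blocks and the decoded symbol sequence γ_1 … γ_t are unique. -/

import Mathlib

inductive Dir13 : Type
  | l | r | u | d
deriving DecidableEq

/-- The clockwise string `r^{x1} d^{x2} l^{x3} u^{x4}`. -/
def cw13 (x1 x2 x3 x4 : ℕ) : List Dir13 :=
  List.replicate x1 .r ++ List.replicate x2 .d ++ List.replicate x3 .l ++ List.replicate x4 .u

/-- The encoding of symbols of `Γ ⊕ Unit` (the `Unit` summand is `#`). -/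
def enc13 {Γ : Type*} (num : Γ → ℕ) (w x y z : ℕ) : Γ ⊕ Unit → Set (List Dir13)
  | .inl γ => {c | ∃ x3 x4 : ℕ, 6 ≤ x3 ∧ 6 ≤ x4 ∧ c = cw13 (num γ) (num γ) x3 x4}
  | .inr _ => {cw13 w x y z}

namespace Aux13

lemma tw_dw (e : Dir13) (n : ℕ) (t : List Dir13) (ht : t.head? ≠ some e) :
    (List.replicate n e ++ t).takeWhile (· == e) = List.replicate n e ∧
    (List.replicate n e ++ t).dropWhile (· == e) = t := by
  induction n with
  | zero =>
    simp only [List.replicate_zero, List.nil_append]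
    cases t with
    | nil => simp
    | cons h t' =>
      simp only [List.head?_cons, ne_eq, Option.some.injEq] at ht
      constructor
      · rw [List.takeWhile_cons_of_neg] <;> simp [ht]
      · rw [List.dropWhile_cons_of_neg]; simp [ht]
  | succ n ih =>
    obtain ⟨ih1, ih2⟩ := ih
    constructor
    · rw [List.replicate_succ, List.cons_append, List.takeWhile_cons_of_pos (by simp), ih1]
    · rw [List.replicate_succ, List.cons_append, List.dropWhile_cons_of_pos (by simp), ih2]

lemma peel (e : Dir13) {n n' : ℕ} {t t' : List Dir13}
    (ht : t.head? ≠ some e) (ht' : t'.head? ≠ some e)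
    (h : List.replicate n e ++ t = List.replicate n' e ++ t') : n = n' ∧ t = t' := by
  obtain ⟨h1, h2⟩ := tw_dw e n t ht
  obtain ⟨h1', h2'⟩ := tw_dw e n' t' ht'
  have hrep : List.replicate n e = List.replicate n' e := by rw [← h1, h, h1']
  have hn : n = n' := by
    have := congrArg List.length hrep; simpa using this
  refine ⟨hn, ?_⟩
  rw [← h2, h, h2']

lemma head?_rep {e : Dir13} {n : ℕ} (hn : 1 ≤ n) (t : List Dir13) :
    (List.replicate n e ++ t).head? = some e := by
  cases n with
  | zero => omega
  | succ n => simp [List.replicate_succ]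

lemma cw_cancel {a b c d a' b' c' d' : ℕ} {s s' : List Dir13}
    (ha : 1 ≤ a) (hb : 1 ≤ b) (hc : 1 ≤ c) (hd : 1 ≤ d)
    (ha' : 1 ≤ a') (hb' : 1 ≤ b') (hc' : 1 ≤ c') (hd' : 1 ≤ d')
    (hs : s.head? ≠ some .u) (hs' : s'.head? ≠ some .u)
    (h : cw13 a b c d ++ s = cw13 a' b' c' d' ++ s') :
    a = a' ∧ b = b' ∧ c = c' ∧ d = d' ∧ s = s' := by
  simp only [cw13, List.append_assoc] at h
  obtain ⟨ea, h⟩ := peel .r (by rw [head?_rep hb]; simp) (by rw [head?_rep hb']; simp) h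
  obtain ⟨eb, h⟩ := peel .d (by rw [head?_rep hc]; simp) (by rw [head?_rep hc']; simp) h
  obtain ⟨ec, h⟩ := peel .l (by rw [head?_rep hd]; simp) (by rw [head?_rep hd']; simp) h
  obtain ⟨ed, h⟩ := peel .u hs hs' h
  exact ⟨ea, eb, ec, ed, h⟩

def Good (cs : List (List Dir13)) : Prop :=
  ∀ c ∈ cs, ∃ a b g d : ℕ, 1 ≤ a ∧ 1 ≤ b ∧ 1 ≤ g ∧ 1 ≤ d ∧ c = cw13 a b g d

lemma join_head {cs : List (List Dir13)} (h : Good cs) : cs.flatten.head? ≠ some .u := by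
  cases cs with
  | nil => simp
  | cons c t =>
    obtain ⟨a, b, g, d, ha, hb, hg, hd, rfl⟩ := h c (List.mem_cons_self)
    simp only [List.flatten_cons, cw13, List.append_assoc]
    rw [head?_rep ha]; simp

lemma cw_ne_nil {a b g d : ℕ} (ha : 1 ≤ a) : cw13 a b g d ≠ [] := by
  intro h
  have := congrArg List.length h
  simp [cw13] at this
  omega

lemma blocks_unique : ∀ cs cs' : List (List Dir13), Good cs → Good cs' →
    cs.flatten = cs'.flatten → cs = cs' := by
  intro cs
  induction cs with
  | nil =>
    intro cs' _ hg' hj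
    cases cs' with
    | nil => rfl
    | cons c' t' =>
      obtain ⟨a, b, g, d, ha, _, _, _, rfl⟩ := hg' c' (List.mem_cons_self)
      simp only [List.flatten_nil, List.flatten_cons] at hj
      exact absurd (List.append_eq_nil_iff.1 hj.symm).1 (cw_ne_nil ha)
  | cons c t ih =>
    intro cs' hg hg' hj
    cases cs' with
    | nil =>
      obtain ⟨a, b, g, d, ha, _, _, _, rfl⟩ := hg c (List.mem_cons_self)
      simp only [List.flatten_nil, List.flatten_cons] at hj
      exact absurd (List.append_eq_nil_iff.1 hj).1 (cw_ne_nil ha)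
    | cons c' t' =>
      obtain ⟨a, b, g, d, ha, hb, hgg, hd, rfl⟩ := hg c (List.mem_cons_self)
      obtain ⟨a', b', g', d', ha', hb', hgg', hd', rfl⟩ := hg' c' (List.mem_cons_self)
      simp only [List.flatten_cons] at hj
      have ht : Good t := fun x hx => hg x (List.mem_cons_of_mem _ hx)
      have ht' : Good t' := fun x hx => hg' x (List.mem_cons_of_mem _ hx)
      obtain ⟨ea, eb, ec, ed, es⟩ :=
        cw_cancel ha hb hgg hd ha' hb' hgg' hd' (join_head ht) (join_head ht') hj
      subst ea; subst eb; subst ec; subst ed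
      rw [ih t' ht ht' es]

lemma count_r (a b g d : ℕ) : (cw13 a b g d).count .r = a := by
  simp [cw13, List.count_append, List.count_replicate]

end Aux13

/-- Decoding correctness: the block decomposition into clockwise strings and the
decoded symbol sequence are unique. -/
theorem stmt_13 {Γ : Type*} (num : Γ → ℕ) (hinj : Function.Injective num)
    (h6 : ∀ γ, 6 ≤ num γ) (w x y z : ℕ)
    (hw : 6 ≤ w) (hx : 6 ≤ x) (hy : 6 ≤ y) (hz : 6 ≤ z)
    (hwr : w ∉ Set.range num)
    (cs cs' : List (List Dir13)) (γs γs' : List (Γ ⊕ Unit))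
    (h1 : List.Forall₂ (fun c γ => c ∈ enc13 num w x y z γ) cs γs)
    (h2 : List.Forall₂ (fun c γ => c ∈ enc13 num w x y z γ) cs' γs')
    (hjoin : cs.flatten = cs'.flatten) :
    cs = cs' ∧ γs = γs' := by
  -- each block is a clockwise string with all parameters ≥ 1
  have hform : ∀ (c : List Dir13) (γ : Γ ⊕ Unit), c ∈ enc13 num w x y z γ →
      ∃ a b g d : ℕ, 1 ≤ a ∧ 1 ≤ b ∧ 1 ≤ g ∧ 1 ≤ d ∧ c = cw13 a b g d := by
    rintro c (γ | u) hc
    · obtain ⟨x3, x4, h3, h4, rfl⟩ := hc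
      have := h6 γ
      refine ⟨num γ, num γ, x3, x4, ?_, ?_, ?_, ?_, rfl⟩ <;> omega
    · rw [hc]
      refine ⟨w, x, y, z, ?_, ?_, ?_, ?_, rfl⟩ <;> omega
  have hgood : ∀ {cs0 : List (List Dir13)} {γs0 : List (Γ ⊕ Unit)},
      List.Forall₂ (fun c γ => c ∈ enc13 num w x y z γ) cs0 γs0 → Aux13.Good cs0 := by
    intro cs0 γs0 hf
    induction hf with
    | nil => intro c hc; simp at hc
    | cons h _ ih =>
      intro c hc
      rcases List.mem_cons.1 hc with rfl | hc
      · exact hform _ _ h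
      · exact ih c hc
  have hcseq : cs = cs' :=
    Aux13.blocks_unique cs cs' (hgood h1) (hgood h2) hjoin
  subst hcseq
  refine ⟨rfl, ?_⟩
  -- uniqueness of the decoded symbol
  have huniq : ∀ (c : List Dir13) (γ γ' : Γ ⊕ Unit),
      c ∈ enc13 num w x y z γ → c ∈ enc13 num w x y z γ' → γ = γ' := by
    rintro c (γ | u) (γ' | u') hc hc'
    · obtain ⟨x3, x4, _, _, rfl⟩ := hc
      obtain ⟨x3', x4', _, _, he⟩ := hc'
      have : num γ = num γ' := by
        have := congrArg (List.count .r) he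
        rwa [Aux13.count_r, Aux13.count_r] at this
      rw [hinj this]
    · obtain ⟨x3, x4, _, _, rfl⟩ := hc
      have he : cw13 (num γ) (num γ) x3 x4 = cw13 w x y z := hc'
      have : num γ = w := by
        have := congrArg (List.count .r) he
        rwa [Aux13.count_r, Aux13.count_r] at this
      exact absurd ⟨γ, this⟩ hwr
    · obtain ⟨x3, x4, _, _, rfl⟩ := hc'
      have he : cw13 (num γ') (num γ') x3 x4 = cw13 w x y z := hc
      have : num γ' = w := by
        have := congrArg (List.count .r) he
        rwa [Aux13.count_r, Aux13.count_r] at this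
      exact absurd ⟨γ', this⟩ hwr
    · cases u; cases u'; rfl
  clear h6 hw hx hy hz hjoin
  induction h1 generalizing γs' with
  | nil => cases h2; rfl
  | cons hcg _ ih =>
    cases h2 with
    | cons hcg' htail =>
      rw [huniq _ _ _ hcg hcg', ih _ htail]
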